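/- arXiv:2009.05986 — 5 statements merged into one kernel-verified Lean document; each statement's English description precedes it below -/
import Mathlib

section
/- Let S be a finite set, P, P̄ : S → [0,1] with ∑_s P(s) = ∑_s P̄(s) = 1, and suppose P̄(s) − W(s) ≤ P(s) for all s ∈ S, where W : S → [0,∞) with W(s) ≤ P̄(s). Define the 'optimistic' distribution P̃(s) = P̄(s) − W(s) + 1{s = s*} · ∑_{s'} W(s'), where s* ∈ argmax_{s ∈ S} h(s) for a given vector h : S → ℝ. Then ∑_{s ∈ S} P̃(s) h(s) ≥ ∑_{s ∈ S} P(s) h(s). -/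
open Finset

theorem sum_mul_le_sum_mul_add_sub_mul {ι R : Type*} [CommRing R] [PartialOrder R]
    [IsOrderedRing R] (s : Finset ι) {P Q h : ι → R} {M : R} (hQP : ∀ i ∈ s, Q i ≤ P i)
    (hM : ∀ i ∈ s, h i ≤ M) :
    ∑ i ∈ s, P i * h i ≤ ∑ i ∈ s, Q i * h i + (∑ i ∈ s, P i - ∑ i ∈ s, Q i) * M := by
  rw [← sub_le_iff_le_add', ← sum_sub_distrib, ← sum_sub_distrib, sum_mul]
  refine sum_le_sum fun i hi => ?_
  calc P i * h i - Q i * h i = (P i - Q i) * h i := (sub_mul _ _ _).symm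
    _ ≤ (P i - Q i) * M := mul_le_mul_of_nonneg_left (hM i hi) (sub_nonneg.2 (hQP i hi))

theorem sum_add_ite_eq_mul {ι R : Type*} [Fintype ι] [DecidableEq ι] [Semiring R]
    (f h : ι → R) (a : ι) (c : R) :
    ∑ i, (f i + if i = a then c else 0) * h i = ∑ i, f i * h i + c * h a := by
  simp only [add_mul, sum_add_distrib, ite_mul, zero_mul, sum_ite_eq', mem_univ, if_true]

theorem optimistic_distribution_dominates_general
    (S : Type) [Fintype S] [DecidableEq S]
    (P Pbar W : S → ℝ) (h : S → ℝ) (sstar : S)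
    (hP1 : ∑ s, P s = 1)
    (hPbar1 : ∑ s, Pbar s = 1)
    (hdom : ∀ s, Pbar s - W s ≤ P s)
    (hstar : ∀ s, h s ≤ h sstar) :
    ∑ s, P s * h s ≤
      ∑ s, (Pbar s - W s + (if s = sstar then ∑ s', W s' else 0)) * h s := by
  calc ∑ s, P s * h s
      ≤ ∑ s, (Pbar s - W s) * h s + (∑ s, P s - ∑ s, (Pbar s - W s)) * h sstar :=
        sum_mul_le_sum_mul_add_sub_mul _ (fun s _ => hdom s) (fun s _ => hstar s)
    _ = ∑ s, (Pbar s - W s) * h s + (∑ s, W s) * h sstar := by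
        rw [sum_sub_distrib, hP1, hPbar1, sub_sub_cancel]
    _ = _ := (sum_add_ite_eq_mul _ h sstar _).symm

/-- The optimistic distribution, which moves all slack mass toward a maximizer of h,
dominates any pointwise-dominating distribution P in expectation of h. -/
theorem optimistic_distribution_dominates
    (S : Type) [Fintype S] [DecidableEq S]
    (P Pbar W : S → ℝ) (h : S → ℝ) (sstar : S)
    (hP0 : ∀ s, 0 ≤ P s) (hP1 : ∑ s, P s = 1)
    (hPbar0 : ∀ s, 0 ≤ Pbar s) (hPbar1 : ∑ s, Pbar s = 1)
    (hW0 : ∀ s, 0 ≤ W s) (hWle : ∀ s, W s ≤ Pbar s)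
    (hdom : ∀ s, Pbar s - W s ≤ P s)
    (hstar : ∀ s, h s ≤ h sstar) :
    ∑ s, P s * h s ≤
      ∑ s, (Pbar s - W s + (if s = sstar then ∑ s', W s' else 0)) * h s :=
  optimistic_distribution_dominates_general S P Pbar W h sstar hP1 hPbar1 hdom hstar
end

section
/- Let S be a finite set, ρ : S → [0,1] a stationary distribution of a Markov chain with transition kernel P̃ on S (i.e., ∑_s ρ(s) = 1 and ρ(s') = ∑_s ρ(s) P̃(s'|s) for all s'). Let r̃, r : S → [0,1] with r̃(s) ≥ r(s) for all s, and let λ*, h : S → ℝ satisfy the Bellman equations h(s) + λ* = r(s) + ∑_{s'} P(s'|s) h(s') for a kernel P on S. If ∑_{s'} (P̃(s'|s) − P(s'|s)) h(s') ≥ 0 for all s, then ∑_s ρ(s) r̃(s) ≥ λ*. -/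
/-!
Average the Bellman equation `h + λ* = r + P h` against the stationary distribution `ρ` of `P̃`.
Stationarity turns `ρ ⬝ h` into `ρ ⬝ P̃ h`, so `ρ ⬝ r = λ* + ρ ⬝ (P̃ - P) h`, and the last term is
nonnegative because `ρ ≥ 0` and `(P̃ - P) h ≥ 0`. Finally `r ≤ r̃` and `ρ ≥ 0` give `ρ ⬝ r ≤ ρ ⬝ r̃`.
-/

open Matrix

section Optimism

variable {S R : Type*} [Fintype S]

theorem dotProduct_mulVec_of_vecMul_eq_self [CommSemiring R] {ρ : S → R} {Q : Matrix S S R}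
    (hstat : ρ ᵥ* Q = ρ) (h : S → R) : ρ ⬝ᵥ (Q *ᵥ h) = ρ ⬝ᵥ h := by
  rw [dotProduct_mulVec, hstat]

theorem dotProduct_reward_eq_gain_add [CommRing R] {ρ r h : S → R} {P Q : Matrix S S R} {lam : R}
    (hρ1 : ∑ s, ρ s = 1) (hstat : ρ ᵥ* Q = ρ) (hBell : ∀ s, h s + lam = r s + (P *ᵥ h) s) :
    ρ ⬝ᵥ r = lam + ρ ⬝ᵥ ((Q - P) *ᵥ h) := by
  have hr : r = h - P *ᵥ h + lam • 1 := by
    funext s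
    simp only [Pi.add_apply, Pi.sub_apply, Pi.smul_apply, Pi.one_apply, smul_eq_mul, mul_one]
    linear_combination -hBell s
  rw [hr, sub_mulVec, dotProduct_sub, dotProduct_mulVec_of_vecMul_eq_self hstat,
    dotProduct_add, dotProduct_sub, dotProduct_smul, dotProduct_one, hρ1, smul_eq_mul, mul_one]
  ring

theorem gain_le_dotProduct_reward [CommRing R] [PartialOrder R] [IsOrderedRing R]
    {ρ r h : S → R} {P Q : Matrix S S R} {lam : R}
    (hρ0 : 0 ≤ ρ) (hρ1 : ∑ s, ρ s = 1) (hstat : ρ ᵥ* Q = ρ)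
    (hBell : ∀ s, h s + lam = r s + (P *ᵥ h) s) (hdom : 0 ≤ (Q - P) *ᵥ h) :
    lam ≤ ρ ⬝ᵥ r := by
  rw [dotProduct_reward_eq_gain_add hρ1 hstat hBell]
  exact le_add_of_nonneg_right (dotProduct_nonneg_of_nonneg hρ0 hdom)

end Optimism

/-- Optimism: if the optimistic reward dominates the true reward and the optimistic
kernel dominates the true kernel in the bias vector, then the average optimistic
reward under any stationary distribution of the optimistic chain is at least λ*. -/
theorem optimism_gain_bound
    (S : Type) [Fintype S]
    (ρ rtilde r h : S → ℝ) (P Ptilde : S → S → ℝ) (lam : ℝ)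
    (hρ0 : ∀ s, 0 ≤ ρ s) (hρ1 : ∑ s, ρ s = 1)
    (hstat : ∀ s', ρ s' = ∑ s, ρ s * Ptilde s s')
    (hr : ∀ s, r s ≤ rtilde s)
    (hBell : ∀ s, h s + lam = r s + ∑ s', P s s' * h s')
    (hdom : ∀ s, 0 ≤ ∑ s', (Ptilde s s' - P s s') * h s') :
    lam ≤ ∑ s, ρ s * rtilde s :=
  calc lam ≤ ρ ⬝ᵥ r :=
        gain_le_dotProduct_reward (P := P) (Q := Ptilde) hρ0 hρ1
          (funext fun s' => (hstat s').symm) hBell hdom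
    _ ≤ ρ ⬝ᵥ rtilde := dotProduct_le_dotProduct_of_nonneg_left hr hρ0
end

section
/- Let N₁, ..., N_K be nonnegative integers representing episode lengths with ∑_{k=1}^K N_k = T, and suppose each episode ends when the cumulative count doubles: N_k ≤ max{∑_{j<k} N_j, 1} for all k. Then ∑_{k=1}^K N_k / √(max{∑_{j<k} N_j, 1}) ≤ (√2 + 1) √T. -/
/-!
Put `S_k = ∑_{j<k} N_j` and `m_k = max S_k 1`. The doubling rule gives `S_{k+1} ≤ 2 m_k`, so
`N_k = (√S_{k+1} - √S_k)(√S_{k+1} + √S_k) ≤ (√S_{k+1} - √S_k)(√2 + 1) √m_k`.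
Dividing by `√m_k` and summing, the right-hand side telescopes to `(√2 + 1) √T`.
-/

open Finset

namespace Real

theorem sub_div_sqrt_max_one_le {a b : ℝ} (ha : 0 ≤ a) (hab : a ≤ b) (hb : b ≤ a + max a 1) :
    (b - a) / √(max a 1) ≤ (√2 + 1) * (√b - √a) := by
  set m := max a 1
  have hm : 0 < √m := sqrt_pos.2 (lt_max_of_lt_right one_pos)
  have hsqrt_b : √b ≤ √2 * √m := by
    rw [← sqrt_mul zero_le_two]
    exact sqrt_le_sqrt (by linarith [le_max_left a 1])
  have hsqrt_a : √a ≤ √m := sqrt_le_sqrt (le_max_left a 1)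
  have hdiff : 0 ≤ √b - √a := sub_nonneg.2 (sqrt_le_sqrt hab)
  rw [div_le_iff₀ hm]
  calc b - a = (√b - √a) * (√b + √a) := by
        rw [mul_comm, ← sq_sub_sq, sq_sqrt (ha.trans hab), sq_sqrt ha]
    _ ≤ (√b - √a) * ((√2 + 1) * √m) := by gcongr; linarith
    _ = (√2 + 1) * (√b - √a) * √m := by ring

theorem sum_range_sub_div_sqrt_max_one_le (s : ℕ → ℝ) (K : ℕ) (hs : ∀ i < K, 0 ≤ s i)
    (hmono : ∀ i < K, s i ≤ s (i + 1)) (hdbl : ∀ i < K, s (i + 1) ≤ s i + max (s i) 1) :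
    ∑ i ∈ range K, (s (i + 1) - s i) / √(max (s i) 1) ≤ (√2 + 1) * (√(s K) - √(s 0)) :=
  calc ∑ i ∈ range K, (s (i + 1) - s i) / √(max (s i) 1)
      ≤ ∑ i ∈ range K, (√2 + 1) * (√(s (i + 1)) - √(s i)) := by
        refine sum_le_sum fun i hi => ?_
        rw [mem_range] at hi
        exact sub_div_sqrt_max_one_le (hs i hi) (hmono i hi) (hdbl i hi)
    _ = (√2 + 1) * (√(s K) - √(s 0)) := by
        rw [← mul_sum, sum_range_sub (fun i => √(s i))]

end Real

namespace Fin

variable {M : Type*} [AddCommMonoid M] {K : ℕ}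

def prefixSum (f : Fin K → M) (i : ℕ) : M :=
  ∑ j ∈ univ.filter (fun j : Fin K => (j : ℕ) < i), f j

theorem prefixSum_zero (f : Fin K → M) : prefixSum f 0 = 0 := by
  simp [prefixSum]

theorem prefixSum_of_le (f : Fin K → M) {i : ℕ} (hi : K ≤ i) : prefixSum f i = ∑ j, f j := by
  rw [prefixSum, filter_true_of_mem fun j _ => j.isLt.trans_le hi]

theorem prefixSum_val (f : Fin K → M) (k : Fin K) :
    prefixSum f k = ∑ j ∈ univ.filter (fun j => j < k), f j := by
  simp only [prefixSum, lt_def]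

theorem prefixSum_val_add_one (f : Fin K → M) (k : Fin K) :
    prefixSum f (k + 1) = prefixSum f k + f k := by
  have hfilter : univ.filter (fun j : Fin K => (j : ℕ) < k + 1) =
      insert k (univ.filter (fun j : Fin K => (j : ℕ) < k)) := by
    ext j
    simp only [mem_filter, mem_univ, true_and, mem_insert, Fin.ext_iff]
    omega
  rw [prefixSum, hfilter, sum_insert (by simp), add_comm, prefixSum]

end Fin

/-- Doubling-trick summation bound (Lemma 19 of Jaksch et al.). -/
theorem doubling_sum_sqrt_bound (K T : ℕ) (N : Fin K → ℕ)
    (hsum : ∑ k, N k = T)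
    (hdbl : ∀ k : Fin K, N k ≤ max (∑ j ∈ Finset.univ.filter (fun j => j < k), N j) 1) :
    ∑ k, (N k : ℝ) / Real.sqrt ((max (∑ j ∈ Finset.univ.filter (fun j => j < k), N j) 1 : ℕ) : ℝ) ≤
      (Real.sqrt 2 + 1) * Real.sqrt T := by
  set s : ℕ → ℝ := fun i => ((Fin.prefixSum N i : ℕ) : ℝ)
  have hstep (k : Fin K) : s (k + 1) = s k + N k := by
    simp only [s, Fin.prefixSum_val_add_one, Nat.cast_add]
  have hincr (k : Fin K) : (N k : ℝ) ≤ max (s k) 1 := by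
    have h := hdbl k
    rw [← Fin.prefixSum_val] at h
    simp only [s]
    exact_mod_cast h
  have hterm (k : Fin K) :
      (N k : ℝ) / √((max (∑ j ∈ univ.filter (fun j => j < k), N j) 1 : ℕ) : ℝ) =
        (s (k + 1) - s k) / √(max (s k) 1) := by
    simp only [hstep, add_sub_cancel_left, s, Fin.prefixSum_val, Nat.cast_max, Nat.cast_one]
  have hbound := Real.sum_range_sub_div_sqrt_max_one_le s K (fun _ _ => Nat.cast_nonneg _)
    (fun i hi => by simp [hstep ⟨i, hi⟩])
    (fun i hi => by rw [hstep ⟨i, hi⟩, add_le_add_iff_left]; exact hincr ⟨i, hi⟩)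
  rw [sum_congr rfl fun k _ => hterm k,
    Fin.sum_univ_eq_sum_range (fun i => (s (i + 1) - s i) / √(max (s i) 1))]
  simpa [s, Fin.prefixSum_zero, Fin.prefixSum_of_le N le_rfl, hsum] using hbound
end

section
/- Let N₁, ..., N_K be positive integers with ∑_{k=1}^K N_k = T and N_k ≤ max{∑_{j<k} N_j, 1} for each k (the doubling episode condition). Then ∑_{k=1}^K N_k / max{∑_{j<k} N_j, 1} ≤ C · (log₂ T + 1) for some absolute constant C (one may take C = 2). -/
/-!
Writing `S` for the count before an episode and `g ≤ S` for its visits, `2 ^ t ≤ 1 + t` on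
`[0, 1]` gives `g / S ≤ log₂ (S + g) - log₂ S`, so the sum of ratios telescopes to `log₂ T`,
plus `1` for the first nonempty episode, whose prior count is `0`.
-/

open Finset Real

/-- The `+ 1` pays for the first nonempty episode, where the ratio is taken against `1`. -/
noncomputable def doublingPotential (n : ℕ) : ℝ :=
  if n = 0 then 0 else logb 2 n + 1

lemma le_logb_two_one_add {t : ℝ} (h0 : 0 ≤ t) (h1 : t ≤ 1) : t ≤ logb 2 (1 + t) := by
  rw [le_logb_iff_rpow_le one_lt_two (by linarith)]
  -- Bernoulli's inequality for exponents in `[0, 1]`: `2 ^ t ≤ 1 + t`.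
  simpa [one_add_one_eq_two] using rpow_one_add_le_one_add_mul_self (s := 1) (by norm_num) h0 h1

lemma div_le_logb_two_add_sub_logb_two {M g : ℝ} (hM : 0 < M) (hg0 : 0 ≤ g) (hg : g ≤ M) :
    g / M ≤ logb 2 (M + g) - logb 2 M := by
  rw [← logb_div (by positivity) hM.ne', show (M + g) / M = 1 + g / M by field_simp]
  exact le_logb_two_one_add (by positivity) ((div_le_one hM).2 hg)

lemma doublingPotential_add_le {S g : ℕ} (hg : g ≤ max S 1) :
    doublingPotential S + g / (max S 1 : ℕ) ≤ doublingPotential (S + g) := by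
  rcases Nat.eq_zero_or_pos S with rfl | hS
  · have hg1 : g ≤ 1 := by simpa using hg
    interval_cases g <;> simp [doublingPotential]
  · rw [max_eq_left hS] at hg ⊢
    have hstep := div_le_logb_two_add_sub_logb_two (M := S) (g := g)
      (by exact_mod_cast hS) (by positivity) (by exact_mod_cast hg)
    simp only [doublingPotential, hS.ne', (hS.trans_le (S.le_add_right g)).ne', if_false,
      Nat.cast_add]
    linarith

lemma sum_div_max_prefix_sum_le_doublingPotential {α : Type*} [LinearOrder α] (s : Finset α)
    (N : α → ℕ) (hdbl : ∀ k ∈ s, N k ≤ max (∑ j ∈ s.filter (· < k), N j) 1) :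
    ∑ k ∈ s, (N k : ℝ) / (max (∑ j ∈ s.filter (· < k), N j) 1 : ℕ) ≤
      doublingPotential (∑ k ∈ s, N k) := by
  induction s using Finset.induction_on_max with
  | empty => simp [doublingPotential]
  | insert a s hlt ih =>
    have ha : a ∉ s := fun h => (hlt a h).false
    have hprefix_a : (insert a s).filter (· < a) = s := by
      rw [filter_insert, if_neg (lt_irrefl a), filter_true_of_mem hlt]
    have hprefix : ∀ k ∈ s, (insert a s).filter (· < k) = s.filter (· < k) := fun k hk => by
      rw [filter_insert, if_neg (hlt k hk).not_gt]
    have hdbl_s : ∀ k ∈ s, N k ≤ max (∑ j ∈ s.filter (· < k), N j) 1 := fun k hk => by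
      simpa [hprefix k hk] using hdbl k (mem_insert_of_mem hk)
    have hdbl_a : N a ≤ max (∑ j ∈ s, N j) 1 := by
      simpa [hprefix_a] using hdbl a (mem_insert_self a s)
    have hratios : ∑ k ∈ s, (N k : ℝ) / (max (∑ j ∈ (insert a s).filter (· < k), N j) 1 : ℕ) =
        ∑ k ∈ s, (N k : ℝ) / (max (∑ j ∈ s.filter (· < k), N j) 1 : ℕ) :=
      sum_congr rfl fun k hk => by rw [hprefix k hk]
    rw [sum_insert ha, sum_insert ha, hprefix_a, hratios, add_comm (N a)]
    linarith [ih hdbl_s, doublingPotential_add_le hdbl_a]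

theorem doubling_sum_ratio_log_bound_general (K T : ℕ) (N : Fin K → ℕ)
    (hsum : ∑ k, N k = T)
    (hdbl : ∀ k : Fin K, N k ≤ max (∑ j ∈ Finset.univ.filter (fun j => j < k), N j) 1) :
    ∑ k, (N k : ℝ) / ((max (∑ j ∈ Finset.univ.filter (fun j => j < k), N j) 1 : ℕ) : ℝ) ≤
      2 * (Real.logb 2 T + 1) := by
  have hpotential : doublingPotential T ≤ 2 * (logb 2 T + 1) := by
    rcases Nat.eq_zero_or_pos T with rfl | hT
    · simp [doublingPotential]
    · have : 0 ≤ logb 2 (T : ℝ) := logb_nonneg one_lt_two (by exact_mod_cast hT)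
      simp only [doublingPotential, hT.ne', if_false]
      linarith
  calc _ ≤ doublingPotential (∑ k, N k) :=
        sum_div_max_prefix_sum_le_doublingPotential univ N fun k _ => hdbl k
    _ ≤ _ := hsum ▸ hpotential

/-- Logarithmic bound on the sum of ratios of in-episode visits to prior counts
under the doubling episode condition (with constant C = 2). -/
theorem doubling_sum_ratio_log_bound (K T : ℕ) (N : Fin K → ℕ)
    (hpos : ∀ k, 0 < N k)
    (hsum : ∑ k, N k = T)
    (hdbl : ∀ k : Fin K, N k ≤ max (∑ j ∈ Finset.univ.filter (fun j => j < k), N j) 1) :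
    ∑ k, (N k : ℝ) / ((max (∑ j ∈ Finset.univ.filter (fun j => j < k), N j) 1 : ℕ) : ℝ) ≤
      2 * (Real.logb 2 T + 1) :=
  doubling_sum_ratio_log_bound_general K T N hsum hdbl
end

section
/- Let X₁, X₂, ... be i.i.d. Bernoulli random variables with mean p, and for n ≥ 1 let p̄_n = (1/n) ∑_{i=1}^n X_i. Fix δ ∈ (0,1). Then with probability at least 1 − δ, for all n ≥ 1 simultaneously: |p̄_n − p| ≤ √(18 p̄_n log(6n/δ) / n) + 18 log(6n/δ) / n. -/
open MeasureTheory ProbabilityTheory Real Finset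

/-! For a Bernoulli variable `Y` with mean `p` and `|t| ≤ 1`,
`E[exp (t (Y - p))] = exp (-t p) (1 + (exp t - 1) p) ≤ exp (p (exp t - 1 - t)) ≤ exp (p t²)`,
so by independence the centred sum `S_n - n p` has moment generating function at most
`exp (n p t²)` on `[-1, 1]`. A Chernoff bound at `t = √x / (√(n p) + √x)` then gives
`|S_n - n p| < 2 √(n p x) + 2 x` outside an event of probability `2 exp (-x)`; with
`x = 2 log (6 n / δ)` this is at most `δ / (18 n²)`, and since `∑ 1 / n² = π² / 6 < 18` a union
bound over `n` costs at most `δ`. Finally AM-GM gives `p ≤ 2 p̄_n + 8 x / n` on that event, which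
turns the radius in the unknown `p` into the stated one in the empirical mean `p̄_n`. -/

section Bernoulli

variable {Ω : Type*} [MeasurableSpace Ω] {μ : Measure Ω} {Y : Ω → ℝ}

lemma exp_mul_of_eq_zero_or_one {y : ℝ} (hy : y = 0 ∨ y = 1) (t : ℝ) :
    exp (t * y) = 1 + (exp t - 1) * y := by
  rcases hy with rfl | rfl <;> simp

lemma integrable_of_eq_zero_or_one [IsFiniteMeasure μ] (hm : Measurable Y)
    (hY : ∀ ω, Y ω = 0 ∨ Y ω = 1) : Integrable Y μ :=
  .of_bound hm.aestronglyMeasurable 1 <| ae_of_all _ fun ω => by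
    rcases hY ω with h | h <;> simp [h]

lemma integrable_exp_mul_of_eq_zero_or_one [IsFiniteMeasure μ] (hm : Measurable Y)
    (hY : ∀ ω, Y ω = 0 ∨ Y ω = 1) (t : ℝ) : Integrable (fun ω => exp (t * Y ω)) μ := by
  simp only [exp_mul_of_eq_zero_or_one (hY _)]
  exact (integrable_const 1).add ((integrable_of_eq_zero_or_one hm hY).const_mul _)

lemma mgf_of_eq_zero_or_one [IsProbabilityMeasure μ] (hm : Measurable Y)
    (hY : ∀ ω, Y ω = 0 ∨ Y ω = 1) (t : ℝ) :
    mgf Y μ t = 1 + (exp t - 1) * μ[Y] := by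
  simp only [mgf, exp_mul_of_eq_zero_or_one (hY _)]
  rw [integral_add (integrable_const 1) ((integrable_of_eq_zero_or_one hm hY).const_mul _),
    integral_const_mul]
  simp

lemma mgf_sub_integral_le_of_eq_zero_or_one [IsProbabilityMeasure μ] (hm : Measurable Y)
    (hY : ∀ ω, Y ω = 0 ∨ Y ω = 1) {t : ℝ} (ht : |t| ≤ 1) :
    mgf (fun ω => Y ω - μ[Y]) μ t ≤ exp (μ[Y] * t ^ 2) := by
  set p := μ[Y]
  have hp : 0 ≤ p := integral_nonneg fun ω => by rcases hY ω with h | h <;> simp [h]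
  calc mgf (fun ω => Y ω - p) μ t = (1 + (exp t - 1) * p) * exp (-(t * p)) := by
        simpa [sub_eq_add_neg, mgf_of_eq_zero_or_one hm hY] using
          mgf_add_const (X := Y) (μ := μ) (t := t) (-p)
    _ ≤ exp ((exp t - 1) * p) * exp (-(t * p)) := by
        gcongr
        linarith [add_one_le_exp ((exp t - 1) * p)]
    _ = exp (p * (exp t - 1 - t)) := by rw [← exp_add]; ring_nf
    _ ≤ exp (p * t ^ 2) := by
        gcongr
        exact (le_abs_self _).trans (abs_exp_sub_one_sub_id_le ht)

end Bernoulli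

lemma sum_sub_natCast_mul_eq_sum_sub {Ω : Type*} (X : ℕ → Ω → ℝ) (p : ℝ) (n : ℕ) :
    (fun ω => ∑ i ∈ range n, X i ω - n * p) = ∑ i ∈ range n, fun ω => X i ω - p := by
  ext ω
  simp [sum_sub_distrib]

section IndependentSum

variable {Ω : Type*} [MeasurableSpace Ω] {μ : Measure Ω} {X : ℕ → Ω → ℝ} {p : ℝ}

lemma ProbabilityTheory.iIndepFun.sub_const (hindep : iIndepFun X μ) (p : ℝ) :
    iIndepFun (fun i ω => X i ω - p) μ :=
  hindep.comp (fun _ x => x - p) fun _ => measurable_id.sub_const p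

lemma integrable_exp_mul_sum_sub_of_eq_zero_or_one [IsFiniteMeasure μ]
    (hmeas : ∀ i, Measurable (X i)) (hindep : iIndepFun X μ)
    (hber : ∀ i ω, X i ω = 0 ∨ X i ω = 1) (n : ℕ) (t : ℝ) :
    Integrable (fun ω => exp (t * (∑ i ∈ range n, X i ω - n * p))) μ := by
  have h := (hindep.sub_const p).integrable_exp_mul_sum (t := t) (s := range n)
    (fun i => (hmeas i).sub_const p) fun i _ => by
      simpa [mul_sub, exp_sub] using
        (integrable_exp_mul_of_eq_zero_or_one (μ := μ) (hmeas i) (hber i) t).div_const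
          (exp (t * p))
  rwa [← sum_sub_natCast_mul_eq_sum_sub] at h

lemma mgf_sum_sub_le_of_eq_zero_or_one [IsProbabilityMeasure μ]
    (hmeas : ∀ i, Measurable (X i)) (hindep : iIndepFun X μ)
    (hber : ∀ i ω, X i ω = 0 ∨ X i ω = 1) (hmean : ∀ i, μ[X i] = p)
    (n : ℕ) {t : ℝ} (ht : |t| ≤ 1) :
    mgf (fun ω => ∑ i ∈ range n, X i ω - n * p) μ t ≤ exp (n * p * t ^ 2) := by
  rw [sum_sub_natCast_mul_eq_sum_sub,
    (hindep.sub_const p).mgf_sum fun i => (hmeas i).sub_const p]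
  calc ∏ i ∈ range n, mgf (fun ω => X i ω - p) μ t ≤ ∏ _i ∈ range n, exp (p * t ^ 2) :=
        prod_le_prod (fun _ _ => mgf_nonneg) fun i _ =>
          hmean i ▸ mgf_sub_integral_le_of_eq_zero_or_one (hmeas i) (hber i) ht
    _ = exp (n * p * t ^ 2) := by
        rw [prod_const, card_range, ← exp_nat_mul]; ring_nf

end IndependentSum

section Tail

variable {Ω : Type*} [MeasurableSpace Ω] {μ : Measure Ω} [IsFiniteMeasure μ] {Z : Ω → ℝ}
  {v x : ℝ}

lemma measureReal_ge_le_exp_neg_of_mgf_le (hv : 0 ≤ v) (hx : 0 < x)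
    (hint : ∀ t, Integrable (fun ω => exp (t * Z ω)) μ)
    (hmgf : ∀ t, |t| ≤ 1 → mgf Z μ t ≤ exp (v * t ^ 2)) :
    μ.real {ω | 2 * √(v * x) + 2 * x ≤ Z ω} ≤ exp (-x) := by
  obtain ⟨a, ha, rfl⟩ : ∃ a, 0 ≤ a ∧ a ^ 2 = v := ⟨√v, sqrt_nonneg v, sq_sqrt hv⟩
  obtain ⟨b, hb, rfl⟩ : ∃ b, 0 < b ∧ b ^ 2 = x := ⟨√x, sqrt_pos.2 hx, sq_sqrt hx.le⟩
  have hab : √(a ^ 2 * b ^ 2) = a * b := by rw [← mul_pow, sqrt_sq (by positivity)]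
  -- the Chernoff parameter `t = b / (a + b)` gives `t * (2ab + 2b²) = 2b²` and `a²t² ≤ b²`
  set t := b / (a + b)
  have ht0 : 0 ≤ t := by positivity
  have ht1 : |t| ≤ 1 := by
    rw [abs_of_nonneg ht0]; exact div_le_one_of_le₀ (by linarith) (by positivity)
  have htT : t * (2 * (a * b) + 2 * b ^ 2) = 2 * b ^ 2 := by
    simp only [t]; field_simp
  have hat : a * t ≤ b := by
    rw [mul_div_assoc', div_le_iff₀ (by positivity)]; nlinarith
  calc μ.real {ω | 2 * √(a ^ 2 * b ^ 2) + 2 * b ^ 2 ≤ Z ω}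
      ≤ exp (-t * (2 * √(a ^ 2 * b ^ 2) + 2 * b ^ 2)) * mgf Z μ t :=
        measure_ge_le_exp_mul_mgf _ ht0 (hint t)
    _ ≤ exp (-t * (2 * √(a ^ 2 * b ^ 2) + 2 * b ^ 2)) * exp (a ^ 2 * t ^ 2) := by
        gcongr; exact hmgf t ht1
    _ = exp (-2 * b ^ 2 + (a * t) ^ 2) := by rw [← exp_add, hab, neg_mul, htT]; ring_nf
    _ ≤ exp (-b ^ 2) := by
        gcongr
        nlinarith [pow_le_pow_left₀ (by positivity) hat 2]

lemma measure_abs_ge_le_two_mul_exp_neg_of_mgf_le (hv : 0 ≤ v) (hx : 0 < x)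
    (hint : ∀ t, Integrable (fun ω => exp (t * Z ω)) μ)
    (hmgf : ∀ t, |t| ≤ 1 → mgf Z μ t ≤ exp (v * t ^ 2)) :
    μ {ω | 2 * √(v * x) + 2 * x ≤ |Z ω|} ≤ ENNReal.ofReal (2 * exp (-x)) := by
  have hupper := measureReal_ge_le_exp_neg_of_mgf_le hv hx hint hmgf
  have hlower := measureReal_ge_le_exp_neg_of_mgf_le (Z := fun ω => -Z ω) (μ := μ) hv hx
    (fun t => by simpa using hint (-t))
    (fun t ht => by simpa [← Pi.neg_def, mgf_neg] using hmgf (-t) (by rwa [abs_neg]))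
  simp only [le_abs, Set.ofPred_or]
  calc _ ≤ μ {ω | 2 * √(v * x) + 2 * x ≤ Z ω} + μ {ω | 2 * √(v * x) + 2 * x ≤ -Z ω} :=
        measure_union_le _ _
    _ ≤ ENNReal.ofReal (exp (-x)) + ENNReal.ofReal (exp (-x)) := by
        rw [← ofReal_measureReal, ← ofReal_measureReal]
        gcongr
    _ = ENNReal.ofReal (2 * exp (-x)) := by
        rw [← ENNReal.ofReal_add (exp_pos _).le (exp_pos _).le, two_mul]

end Tail

lemma measure_iUnion_le_of_le_div_sq {Ω : Type*} [MeasurableSpace Ω] {μ : Measure Ω}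
    {E : ℕ → Set Ω} {c : ℝ} (hc : 0 ≤ c) (hE : ∀ n, μ (E n) ≤ ENNReal.ofReal (c / n ^ 2)) :
    μ (⋃ n, E n) ≤ ENNReal.ofReal (c * π ^ 2 / 6) := by
  have hsum := hasSum_zeta_two.mul_left c
  calc μ (⋃ n, E n) ≤ ∑' n, μ (E n) := measure_iUnion_le _
    _ ≤ ∑' n : ℕ, ENNReal.ofReal (c * (1 / n ^ 2)) :=
        ENNReal.tsum_le_tsum fun n => (hE n).trans_eq (by rw [mul_one_div])
    _ = ENNReal.ofReal (c * π ^ 2 / 6) := by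
        rw [← ENNReal.ofReal_tsum_of_nonneg (fun n => by positivity) hsum.summable,
          hsum.tsum_eq, mul_div_assoc]

lemma ofReal_one_sub_le_of_measure_compl_le {Ω : Type*} [MeasurableSpace Ω] {μ : Measure Ω}
    [IsProbabilityMeasure μ] {s : Set Ω} {δ : ℝ} (hδ : 0 ≤ δ)
    (h : μ sᶜ ≤ ENNReal.ofReal δ) : ENNReal.ofReal (1 - δ) ≤ μ s := by
  have hcover : 1 ≤ μ s + ENNReal.ofReal δ :=
    calc 1 = μ (s ∪ sᶜ) := by rw [Set.union_compl_self, measure_univ]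
      _ ≤ μ s + μ sᶜ := measure_union_le _ _
      _ ≤ μ s + ENNReal.ofReal δ := by gcongr
  rw [ENNReal.ofReal_sub _ hδ, ENNReal.ofReal_one]
  exact tsub_le_iff_right.2 hcover

lemma two_mul_exp_neg_two_mul_log_le {δ n : ℝ} (hδ0 : 0 < δ) (hδ1 : δ ≤ 1) (hn : 0 < n) :
    2 * exp (-(2 * log (6 * n / δ))) ≤ δ / 18 / n ^ 2 := by
  have hexp : exp (2 * log (6 * n / δ)) = (6 * n / δ) ^ 2 := by
    rw [show (2 : ℝ) = (2 : ℕ) by norm_num, exp_nat_mul, exp_log (by positivity)]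
  calc 2 * exp (-(2 * log (6 * n / δ))) = δ ^ 2 / 18 / n ^ 2 := by
        rw [exp_neg, hexp]; field_simp; ring
    _ ≤ δ / 18 / n ^ 2 := by gcongr; nlinarith

lemma abs_sub_le_of_abs_sub_le_sqrt {a b x : ℝ} (ha : 0 ≤ a) (hb : 0 ≤ b) (hx : 0 ≤ x)
    (h : |b - a| ≤ 2 * √(a * x) + 2 * x) : |b - a| ≤ 3 * √(b * x) + 9 * x := by
  set u := √(a * x)
  set r := √(b * x)
  have hu : u ^ 2 = a * x := sq_sqrt (by positivity)
  have hr : r ^ 2 = b * x := sq_sqrt (by positivity)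
  have hu0 : 0 ≤ u := sqrt_nonneg _
  have hr0 : 0 ≤ r := sqrt_nonneg _
  have hamgm : 2 * u ≤ a / 2 + 2 * x := by nlinarith [sq_nonneg (a / 2 - 2 * x)]
  have ha_le : a ≤ 2 * b + 8 * x := by linarith [(abs_le.1 h).1]
  have hu_le : u ≤ 3 / 2 * r + 7 / 2 * x := by
    nlinarith [mul_nonneg hr0 hx, mul_le_mul_of_nonneg_right ha_le hx]
  linarith

lemma abs_div_sub_le_of_abs_sub_le {S p L n : ℝ} (hn : 0 < n) (hp : 0 ≤ p) (hS : 0 ≤ S)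
    (hL : 0 ≤ L) (h : |S - n * p| ≤ 2 * √(n * p * (2 * L)) + 2 * (2 * L)) :
    |S / n - p| ≤ √(18 * (S / n) * L / n) + 18 * L / n := by
  have hconv := abs_sub_le_of_abs_sub_le_sqrt (by positivity) hS (by positivity) h
  have hsqrt : √(18 * (S / n) * L / n) = 3 * √(S * (2 * L)) / n := by
    rw [sqrt_eq_iff_eq_sq (by positivity) (by positivity), div_pow, mul_pow,
      sq_sqrt (by positivity)]
    field_simp
    ring
  calc |S / n - p| = |S - n * p| / n := by
        rw [← abs_of_pos hn, ← abs_div, abs_of_pos hn, sub_div, mul_div_cancel_left₀ _ hn.ne']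
    _ ≤ (3 * √(S * (2 * L)) + 9 * (2 * L)) / n := by gcongr
    _ = √(18 * (S / n) * L / n) + 18 * L / n := by rw [hsqrt]; ring

/-- Anytime empirical-Bernstein concentration for i.i.d. Bernoulli variables:
with probability at least 1 − δ, simultaneously for all n ≥ 1 the empirical mean
is within the data-dependent radius of the true mean. -/
theorem anytime_empirical_bernstein
    {Ω : Type} [MeasurableSpace Ω] (μ : Measure Ω) [IsProbabilityMeasure μ]
    (X : ℕ → Ω → ℝ) (p : ℝ) (δ : ℝ) (hδ : δ ∈ Set.Ioo (0 : ℝ) 1)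
    (hmeas : ∀ i, Measurable (X i))
    (hindep : iIndepFun X μ)
    (hber : ∀ i, ∀ ω, X i ω = 0 ∨ X i ω = 1)
    (hmean : ∀ i, μ[X i] = p) :
    ENNReal.ofReal (1 - δ) ≤
      μ {ω | ∀ n : ℕ, 1 ≤ n →
        |(∑ i ∈ Finset.range n, X i ω) / n - p| ≤
          Real.sqrt (18 * ((∑ i ∈ Finset.range n, X i ω) / n) * Real.log (6 * n / δ) / n)
            + 18 * Real.log (6 * n / δ) / n} := by
  obtain ⟨hδ0, hδ1⟩ := hδ
  have hX0 : ∀ i ω, 0 ≤ X i ω := fun i ω => by rcases hber i ω with h | h <;> simp [h]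
  have hp : 0 ≤ p := hmean 0 ▸ integral_nonneg (hX0 0)
  have hlog : ∀ n : ℕ, 1 ≤ n → 0 < log (6 * n / δ) := fun n hn => log_pos <| by
    rw [one_lt_div hδ0]; linarith [show (1 : ℝ) ≤ n by exact_mod_cast hn]
  -- `1 ≤ n` makes the event at `n = 0` empty, matching the junk value `1 / 0 ^ 2 = 0`
  let bad : ℕ → Set Ω := fun n => {ω | 1 ≤ n ∧ 2 * √(n * p * (2 * log (6 * n / δ)))
    + 2 * (2 * log (6 * n / δ)) ≤ |∑ i ∈ range n, X i ω - n * p|}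
  have hbad : ∀ n : ℕ, μ (bad n) ≤ ENNReal.ofReal (δ / 18 / n ^ 2) := by
    intro n
    rcases Nat.eq_zero_or_pos n with rfl | hn
    · simp [bad]
    calc μ (bad n) ≤ _ := measure_mono fun ω hω => hω.2
      _ ≤ ENNReal.ofReal (2 * exp (-(2 * log (6 * n / δ)))) :=
          measure_abs_ge_le_two_mul_exp_neg_of_mgf_le (by positivity) (by linarith [hlog n hn])
            (integrable_exp_mul_sum_sub_of_eq_zero_or_one hmeas hindep hber n)
            fun t ht => mgf_sum_sub_le_of_eq_zero_or_one hmeas hindep hber hmean n ht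
      _ ≤ _ := ENNReal.ofReal_le_ofReal <|
          two_mul_exp_neg_two_mul_log_le hδ0 hδ1.le (by exact_mod_cast hn)
  have hunion : μ (⋃ n, bad n) ≤ ENNReal.ofReal δ :=
    (measure_iUnion_le_of_le_div_sq (by positivity) hbad).trans <|
      ENNReal.ofReal_le_ofReal (by nlinarith [sq_lt_sq' (by linarith [pi_pos]) pi_lt_four])
  refine ofReal_one_sub_le_of_measure_compl_le hδ0.le ((measure_mono ?_).trans hunion)
  rw [Set.compl_subset_comm]
  intro ω hω n hn
  simp only [bad, Set.mem_compl_iff, Set.mem_iUnion, Set.mem_ofPred_eq, not_exists, not_and,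
    not_le] at hω
  exact abs_div_sub_le_of_abs_sub_le (by positivity) hp (sum_nonneg fun i _ => hX0 i ω)
    (hlog n hn).le (hω n hn).le
end
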